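/- For every integer g ≥ 0 there exists a connected open Feynman graph T_g of the φ₃⁴-theory whose boundary graph ∂T_g is isomorphic, as a vertex-bipartite edge-3-colored graph, to the canonical genus-g graph C_g (which triangulates the closed orientable surface of genus g). -/

import Mathlib

/-!  Open colored graphs. -/

/-- An open `(D+1)`-colored graph with colors `{0,1,…,D}`: finite sets `W` (white) and
`B` (black) of vertices, bijections `σ c : W ≃ B` for the colors `c = 1,…,D` (indexed by
`Fin D`), and color-0 data: subsets `W₀ ⊆ W` and `B₀ ⊆ B` and a map `σ₀` which (for a
proper graph, see `OGraph.IsProper`) restricts to a bijection from `W₀` onto `B₀`; the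
color-0 edges are the pairs `(w, σ₀ w)` with `w ∈ W₀`.  The vertices outside `W₀ ∪ B₀`
are the external vertices. -/
structure OGraph (D : ℕ) where
  W : Type
  B : Type
  finW : Finite W
  finB : Finite B
  σ : Fin D → W ≃ B
  W₀ : Set W
  B₀ : Set B
  σ₀ : W → B

namespace OGraph

variable {D : ℕ}

/-- The color-0 data is a bijection from `W₀` onto `B₀`. -/
def IsProper (G : OGraph D) : Prop := Set.BijOn G.σ₀ G.W₀ G.B₀

/-- A closed graph is an open graph with no external vertices. -/
def IsClosed (G : OGraph D) : Prop := G.W₀ = Set.univ ∧ G.B₀ = Set.univ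

/-- One step along a (0c)-bicolored path: from the white vertex `w` walk along the
color-`c` edge to `σ_c w` and then back along a color-0 edge to the white vertex `w'`. -/
def Step (G : OGraph D) (c : Fin D) (w w' : G.W) : Prop :=
  w' ∈ G.W₀ ∧ G.σ c w ∈ G.B₀ ∧ G.σ₀ w' = G.σ c w

/-- Boundary adjacency (the color-`c` edges of the boundary graph `∂G`): the external
vertices `w` and `b` are the two endpoints of a maximal (0c)-bicolored path of `G`. -/
def BdryAdj (G : OGraph D) (c : Fin D) (w : G.W) (b : G.B) : Prop :=
  w ∉ G.W₀ ∧ b ∉ G.B₀ ∧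
    ∃ w' : G.W, Relation.ReflTransGen (G.Step c) w w' ∧ G.σ c w' = b

/-- Adjacency of vertices of an open colored graph (an edge of any color joins them). -/
def Adj (G : OGraph D) : G.W ⊕ G.B → G.W ⊕ G.B → Prop
  | Sum.inl w, Sum.inr b => (∃ c, G.σ c w = b) ∨ (w ∈ G.W₀ ∧ G.σ₀ w = b)
  | Sum.inr b, Sum.inl w => (∃ c, G.σ c w = b) ∨ (w ∈ G.W₀ ∧ G.σ₀ w = b)
  | Sum.inl _, Sum.inl _ => False
  | Sum.inr _, Sum.inr _ => False

/-- A graph is connected if any two of its vertices are joined by a path of edges. -/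
def Connected (G : OGraph D) : Prop :=
  ∀ x y : G.W ⊕ G.B, Relation.ReflTransGen G.Adj x y

/-- An open 4-colored graph (colors `{0,1,2,3}`; the colors `1,2,3` are indexed by
`Fin 3`) is a Feynman graph of the φ₃⁴-theory iff every connected component of the
3-colored graph obtained by deleting all color-0 edges is one of the quartic vertices
`V₁, V₂, V₃`: the white vertices pair up, `w` with a partner `w' ≠ w`, so that for some
color `i` the two edges at `w` of the colors `j ≠ i` end at the same black vertex as the
color-`i` edge of `w'`, and vice versa. -/
def Phi34 (G : OGraph 3) : Prop :=
  ∀ w : G.W, ∃ i : Fin 3, ∃ w' : G.W, w' ≠ w ∧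
    (∀ j : Fin 3, j ≠ i → G.σ j w = G.σ i w') ∧
    (∀ j : Fin 3, j ≠ i → G.σ j w' = G.σ i w)

/-- Connected sum of two open `(D+1)`-colored graphs along the color-0 edges
`(wg, σ₀ wg)` of `G` and `(wh, σ₀ wh)` of `H`: delete the two edges and add the color-0
edges `(wg, H.σ₀ wh)` and `(wh, G.σ₀ wg)`; all other edges are kept. -/
noncomputable def connSum0 (G H : OGraph D) (wg : G.W) (wh : H.W) : OGraph D where
  W := G.W ⊕ H.W
  B := G.B ⊕ H.B
  finW := by haveI := G.finW; haveI := H.finW; exact inferInstance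
  finB := by haveI := G.finB; haveI := H.finB; exact inferInstance
  σ := fun c => (G.σ c).sumCongr (H.σ c)
  W₀ := Sum.inl '' G.W₀ ∪ Sum.inr '' H.W₀
  B₀ := Sum.inl '' G.B₀ ∪ Sum.inr '' H.B₀
  σ₀ := fun x =>
    letI : DecidableEq (G.W ⊕ H.W) := Classical.decEq _
    if x = Sum.inl wg then Sum.inr (H.σ₀ wh)
    else if x = Sum.inr wh then Sum.inl (G.σ₀ wg)
    else Sum.map G.σ₀ H.σ₀ x

end OGraph

/-- The color-`c` bijection (white `i` ↦ black vertex) of the canonical genus-`g`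
graph `C_g`: its vertices are indexed by `ℤ/(2g+1)`, the color-1 edges are `w_i b_i`,
the color-2 edges are `w_i b_{i−1}`, and the color-3 edges are `w_i b_{i+g}`
(colors `1,2,3` indexed by `Fin 3` as `0 ↦ 1`, `1 ↦ 2`, `2 ↦ 3`). -/
def canonicalσ (g : ℕ) (c : Fin 3) : ZMod (2 * g + 1) ≃ ZMod (2 * g + 1) :=
  if c = 0 then Equiv.refl _
  else if c = 1 then Equiv.subRight (1 : ZMod (2 * g + 1))
  else Equiv.addRight (g : ZMod (2 * g + 1))

/-
The bordism `T_g` is a necklace of `2g+1` beads. Bead `k` consists of two quartic vertices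
on the white vertices `(i, k)`, `i : Fin 4`: a `V₁` on `{0, 1}` and a `V₂` on `{2, 3}`. The
white `(0, k)` and the black `(1, k)` are external, and the color-0 edges
`(3, k) — b(0, k)`, `(1, k) — b(2, k+1)`, `(2, k) — b(3, k+g)` link the beads into one
connected graph. Following the (0c)-bicolored path out of `(0, k)` one leaves the graph at
`b(1, k)`, `b(1, k-1)` and `b(1, k-g-1) = b(1, k+g)` for `c = 1, 2, 3`: these are exactly
the edges of `C_g`. Since color 0 is a partial bijection, (0c)-paths are deterministic, so
exhibiting one such path determines the boundary edge.
-/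

namespace OGraph

variable {D : ℕ} {G : OGraph D}

lemma step_of_σ₀_eq (hG : G.IsProper) {c : Fin D} {w x : G.W} (hx : x ∈ G.W₀)
    (h : G.σ₀ x = G.σ c w) : G.Step c w x :=
  ⟨hx, h ▸ hG.mapsTo hx, h⟩

lemma step_rightUnique (hG : G.IsProper) (c : Fin D) : Relator.RightUnique (G.Step c) :=
  fun _ _ _ hx hy => hG.injOn hx.1 hy.1 (hx.2.2.trans hy.2.2.symm)

lemma eq_of_reflTransGen_step {c : Fin D} {w w' : G.W}
    (h : Relation.ReflTransGen (G.Step c) w w') (hexit : G.σ c w ∉ G.B₀) : w = w' := by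
  rcases h.cases_head with h | ⟨_, hstep, _⟩
  · exact h
  · exact absurd hstep.2.1 hexit

lemma bdryAdj_iff_of_reflTransGen (hG : G.IsProper) {c : Fin D} {w w' : G.W} {b : G.B}
    (hw : w ∉ G.W₀) (hb : b ∉ G.B₀) (hpath : Relation.ReflTransGen (G.Step c) w w')
    (hexit : G.σ c w' ∉ G.B₀) : G.BdryAdj c w b ↔ G.σ c w' = b := by
  refine ⟨fun ⟨_, _, w'', hpath', hend⟩ => ?_, fun h => ⟨hw, hb, w', hpath, h⟩⟩
  rcases hpath.total_of_right_unique (step_rightUnique hG c) hpath' with h | h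
  · rwa [eq_of_reflTransGen_step h hexit]
  · rwa [← eq_of_reflTransGen_step h (hend ▸ hb)]

instance : Std.Symm G.Adj where
  symm := by rintro (_ | _) (_ | _) h <;> exact h

lemma adj_σ (c : Fin D) (w : G.W) : G.Adj (.inl w) (.inr (G.σ c w)) :=
  .inl ⟨c, rfl⟩

lemma adj_σ₀ {w : G.W} (hw : w ∈ G.W₀) : G.Adj (.inl w) (.inr (G.σ₀ w)) :=
  .inr ⟨hw, rfl⟩

lemma connected_of_forall_reflTransGen (v : G.W ⊕ G.B)
    (h : ∀ x, Relation.ReflTransGen G.Adj v x) : G.Connected :=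
  fun x y => (Std.Symm.symm _ _ (h x)).trans (h y)

end OGraph

lemma reflTransGen_zmod_of_succ {α : Type*} {r : α → α → Prop} {n : ℕ} [NeZero n]
    (f : ZMod n → α) (h : ∀ k, Relation.ReflTransGen r (f k) (f (k + 1))) (k : ZMod n) :
    Relation.ReflTransGen r (f 0) (f k) := by
  rw [← ZMod.natCast_zmod_val k]
  induction k.val with
  | zero => simpa using .refl
  | succ m ih => exact ih.trans (by simpa using h m)

/-- Phrased with `¬ ≠` so that it applies to `{x // x ∉ {x | x.1 ≠ a}}` definitionally. -/
def fiberFstEquiv {α β : Type*} (a : α) : {x : α × β // ¬x.1 ≠ a} ≃ β where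
  toFun x := x.1.2
  invFun b := ⟨(a, b), not_not.2 rfl⟩
  left_inv := by
    rintro ⟨⟨a', b⟩, h⟩
    obtain rfl := not_not.1 h
    rfl
  right_inv _ := rfl

namespace Phi34Bordism

open OGraph Relation

def quarticPerm : Fin 3 → Equiv.Perm (Fin 4) := ![Equiv.swap 0 1, Equiv.swap 2 3, Equiv.refl _]

lemma exists_quartic_partner (a : Fin 4) : ∃ i : Fin 3, ∃ b : Fin 4, b ≠ a ∧
    (∀ j, j ≠ i → quarticPerm j a = quarticPerm i b) ∧
    (∀ j, j ≠ i → quarticPerm j b = quarticPerm i a) := by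
  revert a
  decide

variable (g : ℕ)

/-- The value at the external white vertices `(0, k)` is a dummy. -/
def bridge (x : Fin 4 × ZMod (2 * g + 1)) : Fin 4 × ZMod (2 * g + 1) :=
  (![0, 2, 3, 0] x.1, x.2 + ![0, 1, (g : ZMod (2 * g + 1)), 0] x.1)

def bordism : OGraph 3 where
  W := Fin 4 × ZMod (2 * g + 1)
  B := Fin 4 × ZMod (2 * g + 1)
  finW := inferInstance
  finB := inferInstance
  σ c := (quarticPerm c).prodCongr (Equiv.refl _)
  W₀ := {x | x.1 ≠ 0}
  B₀ := {x | x.1 ≠ 1}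
  σ₀ := bridge g

@[simp]
lemma bordism_σ (c : Fin 3) (x : Fin 4 × ZMod (2 * g + 1)) :
    (bordism g).σ c x = (quarticPerm c x.1, x.2) :=
  rfl

lemma isProper : (bordism g).IsProper := by
  refine ⟨?_, ?_, ?_⟩
  · rintro ⟨i, k⟩ _
    show (bridge g (i, k)).1 ≠ 1
    fin_cases i <;> simp [bridge]
  · rintro ⟨i, k⟩ (hi : i ≠ 0) ⟨j, l⟩ (hj : j ≠ 0)
      (h : bridge g (i, k) = bridge g (j, l))
    show ((i, k) : Fin 4 × ZMod (2 * g + 1)) = (j, l)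
    fin_cases i <;> fin_cases j <;> simp_all [bridge]
  · rintro ⟨j, m⟩ (hj : j ≠ 1)
    fin_cases j
    exacts [⟨(3, m), (by decide : (3 : Fin 4) ≠ 0), by simp [bordism, bridge]⟩, absurd rfl hj,
      ⟨(1, m - 1), (by decide : (1 : Fin 4) ≠ 0), by simp [bordism, bridge]⟩,
      ⟨(2, m - g), (by decide : (2 : Fin 4) ≠ 0), by simp [bordism, bridge]⟩]

lemma phi34 : (bordism g).Phi34 := by
  rintro ⟨a, k⟩
  obtain ⟨i, b, hne, hab, hba⟩ := exists_quartic_partner a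
  exact ⟨i, (b, k), fun h => hne (congrArg Prod.fst h), fun j hj => Prod.ext (hab j hj) rfl,
    fun j hj => Prod.ext (hba j hj) rfl⟩

lemma reach_σ (c : Fin 3) (i j : Fin 4) (k : ZMod (2 * g + 1)) (h : quarticPerm c i = j) :
    ReflTransGen (bordism g).Adj (.inl (i, k)) (.inr (j, k)) :=
  .single (h ▸ adj_σ (G := bordism g) c (i, k))

lemma reach_bridge (i : Fin 4) (k : ZMod (2 * g + 1)) (y : Fin 4 × ZMod (2 * g + 1))
    (hi : i ≠ 0) (h : bridge g (i, k) = y) :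
    ReflTransGen (bordism g).Adj (.inl (i, k)) (.inr y) :=
  .single (h ▸ adj_σ₀ (G := bordism g) (w := (i, k)) hi)

lemma reach_bead (k : ZMod (2 * g + 1)) (i : Fin 4) :
    ReflTransGen (bordism g).Adj (.inl (0, k)) (.inl (i, k)) ∧
      ReflTransGen (bordism g).Adj (.inl (0, k)) (.inr (i, k)) := by
  have r0 := reach_σ g 1 0 0 k rfl
  have r1 := reach_σ g 0 0 1 k rfl
  have l1 := r1.trans (Std.Symm.symm _ _ (reach_σ g 1 1 1 k rfl))
  have l3 := r0.trans
    (Std.Symm.symm _ _ (reach_bridge g 3 k (0, k) (by decide) (by simp [bridge])))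
  have r3 := l3.trans (reach_σ g 0 3 3 k rfl)
  have l2 := r3.trans (Std.Symm.symm _ _ (reach_σ g 1 2 3 k rfl))
  have r2 := l2.trans (reach_σ g 0 2 2 k rfl)
  fin_cases i
  exacts [⟨.refl, r0⟩, ⟨l1, r1⟩, ⟨l2, r2⟩, ⟨l3, r3⟩]

lemma reach_next_bead (k : ZMod (2 * g + 1)) :
    ReflTransGen (bordism g).Adj (.inl (0, k)) (.inl (0, k + 1)) :=
  ((reach_bead g k 1).1.trans (reach_bridge g 1 k (2, k + 1) (by decide) (by simp [bridge]))).trans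
    (Std.Symm.symm _ _ (reach_bead g (k + 1) 2).2)

lemma connected : (bordism g).Connected := by
  have spine : ∀ k, ReflTransGen (bordism g).Adj (.inl (0, 0)) (.inl (0, k)) :=
    reflTransGen_zmod_of_succ (fun k => Sum.inl (0, k)) (reach_next_bead g)
  refine connected_of_forall_reflTransGen (.inl (0, 0)) ?_
  rintro (⟨i, k⟩ | ⟨i, k⟩)
  exacts [(spine k).trans (reach_bead g k i).1, (spine k).trans (reach_bead g k i).2]

lemma step_of_bridge_eq {c : Fin 3} {w x : Fin 4 × ZMod (2 * g + 1)} (hx : x.1 ≠ 0)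
    (h : bridge g x = (quarticPerm c w.1, w.2)) : (bordism g).Step c w x :=
  step_of_σ₀_eq (isProper g) hx h

lemma exists_exit_path (c : Fin 3) (k : ZMod (2 * g + 1)) :
    ∃ w', ReflTransGen ((bordism g).Step c) (0, k) w' ∧
      (bordism g).σ c w' = (1, canonicalσ g c k) := by
  match c with
  | 0 => exact ⟨(0, k), .refl, rfl⟩
  | 1 =>
    have s₁ : (bordism g).Step 1 (0, k) (3, k) :=
      step_of_bridge_eq g (by simp) (Prod.ext rfl (by simp [bridge]))
    have s₂ : (bordism g).Step 1 (3, k) (1, k - 1) :=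
      step_of_bridge_eq g (by simp) (Prod.ext rfl (by simp [bridge]))
    exact ⟨_, .tail (.single s₁) s₂, Prod.ext rfl (by simp [canonicalσ])⟩
  | 2 =>
    have hg : (k - g - 1 : ZMod (2 * g + 1)) = k + g := by
      have h0 : (2 * g + 1 : ZMod (2 * g + 1)) = 0 := by
        exact_mod_cast ZMod.natCast_self (2 * g + 1)
      linear_combination -h0
    have s₁ : (bordism g).Step 2 (0, k) (3, k) :=
      step_of_bridge_eq g (by simp) (Prod.ext rfl (by simp [bridge]))
    have s₂ : (bordism g).Step 2 (3, k) (2, k - g) :=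
      step_of_bridge_eq g (by simp) (Prod.ext rfl (by simp [bridge]))
    have s₃ : (bordism g).Step 2 (2, k - g) (1, k + g) :=
      step_of_bridge_eq g (by simp) (Prod.ext rfl (by simp [bridge, ← hg]))
    exact ⟨_, .tail (.tail (.single s₁) s₂) s₃, Prod.ext rfl (by simp [canonicalσ])⟩

lemma bdryAdj_iff (c : Fin 3) (k m : ZMod (2 * g + 1)) :
    (bordism g).BdryAdj c (0, k) (1, m) ↔ canonicalσ g c k = m := by
  obtain ⟨w', hpath, hexit⟩ := exists_exit_path g c k
  refine (bdryAdj_iff_of_reflTransGen (isProper g) (w := (0, k)) (b := (1, m))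
    (fun h => h rfl) (fun h => h rfl) hpath (hexit ▸ fun h => h rfl)).trans ?_
  rw [hexit]
  exact ⟨congrArg Prod.snd, congrArg _⟩

end Phi34Bordism

theorem phi34_null_bordism (g : ℕ) :
    ∃ T : OGraph 3, T.IsProper ∧ T.Phi34 ∧ T.Connected ∧
      ∃ (eW : {w : T.W // w ∉ T.W₀} ≃ ZMod (2 * g + 1))
        (eB : {b : T.B // b ∉ T.B₀} ≃ ZMod (2 * g + 1)),
        ∀ (c : Fin 3) (w : {w : T.W // w ∉ T.W₀}) (b : {b : T.B // b ∉ T.B₀}),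
          T.BdryAdj c w.1 b.1 ↔ canonicalσ g c (eW w) = eB b := by
  refine ⟨_, Phi34Bordism.isProper g, Phi34Bordism.phi34 g, Phi34Bordism.connected g,
    fiberFstEquiv 0, fiberFstEquiv 1, fun c w b => ?_⟩
  obtain ⟨k, rfl⟩ := (fiberFstEquiv 0).symm.surjective w
  obtain ⟨m, rfl⟩ := (fiberFstEquiv 1).symm.surjective b
  exact Phi34Bordism.bdryAdj_iff g c k m
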